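/- Let p ≥ 1 be an integer, let N be a p-rooted almost-binary phylogenetic network on X, and let {Z_1, ..., Z_d} be the maximal zig-zag trail decomposition of N. For any S ⊆ E(N), the induced subgraph N[S] is a minimum support network of N (i.e., has the fewest edges among all support networks of N) if and only if S ∩ E(Z_i) is a C-admissible subset of E(Z_i) for every i ∈ [1, d]. -/

import Mathlib

open Finset

variable {V : Type} [DecidableEq V] [Fintype V]

/-- The vertex set of the digraph given by the edge set `E`. -/
def verts (E : Finset (V × V)) : Finset V :=
  E.image Prod.fst ∪ E.image Prod.snd

/-- In-degree of `v` in the digraph with edge set `E`. -/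
def indeg (E : Finset (V × V)) (v : V) : ℕ :=
  (E.filter fun e => e.2 = v).card

/-- Out-degree of `v` in the digraph with edge set `E`. -/
def outdeg (E : Finset (V × V)) (v : V) : ℕ :=
  (E.filter fun e => e.1 = v).card

/-- `E` is (the edge set of) a `p`-rooted almost-binary phylogenetic network on `X`:
a finite simple DAG with exactly `p` in-degree-0 vertices, each of out-degree 1 or 2 (the roots),
whose set of in-degree-1, out-degree-0 vertices is `X` (the leaves), and all of whose other
vertices have in-degree and out-degree in `{1, 2}`. -/
structure IsPhyloNet (E : Finset (V × V)) (p : ℕ) (X : Finset V) : Prop where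
  acyclic : ∀ v : V, ¬ Relation.TransGen (fun a b => (a, b) ∈ E) v v
  roots_card : ((verts E).filter fun v => indeg E v = 0).card = p
  root_outdeg : ∀ v ∈ verts E, indeg E v = 0 → outdeg E v = 1 ∨ outdeg E v = 2
  leaves_eq : (verts E).filter (fun v => indeg E v = 1 ∧ outdeg E v = 0) = X
  internal_deg : ∀ v ∈ verts E, indeg E v ≠ 0 → v ∉ X →
    (indeg E v = 1 ∨ indeg E v = 2) ∧ (outdeg E v = 1 ∨ outdeg E v = 2)

/-- Two directed edges share a tail or share a head. -/
def Shares (e f : V × V) : Prop := e.1 = f.1 ∨ e.2 = f.2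

/-- `S` is (the edge set of) a zig-zag trail of the digraph `E`: a subgraph with `m ≥ 1`
edges which can be ordered so that consecutive edges share a head or share a tail. -/
def IsZigzagTrail (E S : Finset (V × V)) : Prop :=
  S ⊆ E ∧ ∃ l : List (V × V), l ≠ [] ∧ l.Nodup ∧ l.toFinset = S ∧ l.Chain' Shares

/-- A maximal zig-zag trail: one that is not a proper subgraph of another zig-zag trail. -/
def IsMaximalZigzagTrail (E S : Finset (V × V)) : Prop :=
  IsZigzagTrail E S ∧ ∀ S', IsZigzagTrail E S' → ¬ S ⊂ S'

/-- The `i`-th edge (0-indexed) of a zig-zag sequence on vertices `f 0, f 1, ...`;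
when `down = true` the first edge descends (`f 0 > f 1`), and directions alternate. -/
def zigEdge (f : ℕ → V) (down : Bool) (i : ℕ) : V × V :=
  if decide (i % 2 = 0) = down then (f i, f (i + 1)) else (f (i + 1), f i)

/-- `S` consists of the `m` distinct edges of the zig-zag sequence on `f 0, ..., f m`. -/
def IsZigzagShape (S : Finset (V × V)) (m : ℕ) (f : ℕ → V) (down : Bool) : Prop :=
  S = (Finset.range m).image (zigEdge f down) ∧
  ∀ i < m, ∀ j < m, zigEdge f down i = zigEdge f down j → i = j

/-- A crown: an even number `m` of edges written cyclically as `v₀ > v₁ < ⋯ < v_m = v₀`. -/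
def IsCrown (S : Finset (V × V)) : Prop :=
  ∃ m f, 1 ≤ m ∧ m % 2 = 0 ∧ f m = f 0 ∧ IsZigzagShape S m f true

/-- An M-fence: a non-crown with an even number `m` of edges,
of the form `v₀ < v₁ > ⋯ > v_m ≠ v₀`. -/
def IsMFence (S : Finset (V × V)) : Prop :=
  ¬ IsCrown S ∧ ∃ m f, 1 ≤ m ∧ m % 2 = 0 ∧ f m ≠ f 0 ∧ IsZigzagShape S m f false

/-- A W-fence: a non-crown with an even number `m` of edges,
of the form `v₀ > v₁ < ⋯ < v_m ≠ v₀`. -/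
def IsWFence (S : Finset (V × V)) : Prop :=
  ¬ IsCrown S ∧ ∃ m f, 1 ≤ m ∧ m % 2 = 0 ∧ f m ≠ f 0 ∧ IsZigzagShape S m f true

/-- An N-fence: a non-crown with an odd number `m` of edges,
of the form `v₀ > v₁ < ⋯ > v_m`. -/
def IsNFence (S : Finset (V × V)) : Prop :=
  ¬ IsCrown S ∧ ∃ m f, m % 2 = 1 ∧ IsZigzagShape S m f true

/-- A support network of `N = (V, E)`: a spanning subgraph that is itself a
`p`-rooted almost-binary phylogenetic network on `X` (identified with its edge set). -/
def IsSupportNet (E S : Finset (V × V)) (p : ℕ) (X : Finset V) : Prop :=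
  S ⊆ E ∧ verts S = verts E ∧ IsPhyloNet S p X

/-- A minimal support network: no support network is a proper subgraph of it. -/
def IsMinimalSupportNet (E S : Finset (V × V)) (p : ℕ) (X : Finset V) : Prop :=
  IsSupportNet E S p X ∧ ∀ S', IsSupportNet E S' p X → ¬ S' ⊂ S

/-- A minimum support network: one with the fewest edges among all support networks. -/
def IsMinimumSupportNet (E S : Finset (V × V)) (p : ℕ) (X : Finset V) : Prop :=
  IsSupportNet E S p X ∧ ∀ S', IsSupportNet E S' p X → S.card ≤ S'.card

/-- `S ⊆ Z` is A-admissible (degrees taken in the ambient network `E`):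
(C1) `S` contains every edge `(u,v)` of `Z` with `outdeg u = 1` or `indeg v = 1`;
(C2) of any two distinct edges of `Z` sharing a tail or a head, `S` contains at least one. -/
def AAdmissible (E Z S : Finset (V × V)) : Prop :=
  S ⊆ Z ∧
  (∀ e ∈ Z, (outdeg E e.1 = 1 ∨ indeg E e.2 = 1) → e ∈ S) ∧
  (∀ e₁ ∈ Z, ∀ e₂ ∈ Z, e₁ ≠ e₂ → Shares e₁ e₂ → e₁ ∈ S ∨ e₂ ∈ S)

/-- A B-admissible subset: an A-admissible subset none of whose proper subsets
is A-admissible. -/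
def BAdmissible (E Z S : Finset (V × V)) : Prop :=
  AAdmissible E Z S ∧ ∀ S', S' ⊂ S → ¬ AAdmissible E Z S'

/-- A C-admissible subset: an A-admissible subset of minimum cardinality. -/
def CAdmissible (E Z S : Finset (V × V)) : Prop :=
  AAdmissible E Z S ∧ ∀ S', AAdmissible E Z S' → S.card ≤ S'.card

/-- One subdivision step: an edge `(u, v)` is replaced by `(u, w), (w, v)` for a fresh
vertex `w`. -/
def SubdivStep (T T' : Finset (V × V)) : Prop :=
  ∃ u w v, (u, v) ∈ T ∧ w ∉ verts T ∧
    T' = insert (u, w) (insert (w, v) (T.erase (u, v)))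

/-- `S` is a subdivision of `T` (zero or more subdivision steps). -/
def IsSubdivisionOf (S T : Finset (V × V)) : Prop :=
  Relation.ReflTransGen SubdivStep T S

/-- A rooted binary phylogenetic tree on `X`: a 1-rooted network on `X` in which every
non-root, non-leaf vertex has in-degree 1 and out-degree 2. -/
def IsBinaryPhyloTree (T : Finset (V × V)) (X : Finset V) : Prop :=
  IsPhyloNet T 1 X ∧
  ∀ v ∈ verts T, indeg T v ≠ 0 → v ∉ X → indeg T v = 1 ∧ outdeg T v = 2

/-- `N = (V, E)` is tree-based: it has a support tree, i.e. a spanning subgraph that is a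
subdivision of some rooted binary phylogenetic tree on `X`. -/
def IsTreeBased (E : Finset (V × V)) (X : Finset V) : Prop :=
  ∃ S T, S ⊆ E ∧ verts S = verts E ∧ IsBinaryPhyloTree T X ∧ IsSubdivisionOf S T

/-- The underlying undirected simple graph of the digraph with edge set `S`. -/
def usym (S : Finset (V × V)) : SimpleGraph V where
  Adj u v := u ≠ v ∧ ((u, v) ∈ S ∨ (v, u) ∈ S)
  symm := ⟨fun _ _ h => ⟨h.1.symm, h.2.symm⟩⟩
  loopless := ⟨fun _ h => h.1 rfl⟩

/-- Two edges of `S` lie in a common block of the underlying undirected graph: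
they are equal or lie on a common cycle. -/
def SameBlock (S : Finset (V × V)) (e f : V × V) : Prop :=
  e = f ∨ ∃ (a : V) (w : (usym S).Walk a a), w.IsCycle ∧
    s(e.1, e.2) ∈ w.edges ∧ s(f.1, f.2) ∈ w.edges

/-- The number of reticulations (in-degree-2 vertices) contained in the block of the
edge `e` of `S`. -/
noncomputable def blockReticCount (S : Finset (V × V)) (e : V × V) : ℕ :=
  Set.ncard {v : V | indeg S v = 2 ∧ ∃ f ∈ S, SameBlock S e f ∧ (f.1 = v ∨ f.2 = v)}

/-- The level of the network with edge set `S`: the maximum number of reticulations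
contained in a block. -/
noncomputable def level (S : Finset (V × V)) : ℕ :=
  S.sup (blockReticCount S)

/-!
A spanning subgraph `S ⊆ E` is a support network exactly when it keeps every tail and every
head of `E`: dropping the last in-edge of a vertex creates an extra root, a non-leaf may not
lose all its out-edges, and otherwise all degree constraints are inherited from `E`. Since all
in- and out-degrees are at most 2, keeping every tail and head is the same as `S` being
A-admissible in all of `E`. Two edges sharing an endpoint lie in the same maximal zig-zag
trail, so this splits into A-admissibility of each `S ∩ E(Zᵢ)`. As the trails partition `E`,
`|S| = Σ |S ∩ E(Zᵢ)|` with independent constraints on the summands, so `|S|` is minimum iff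
every summand is.
-/

set_option linter.unusedSectionVars false

section Degrees

variable {E S : Finset (V × V)} {v : V}

theorem mem_verts : v ∈ verts E ↔ v ∈ E.image Prod.fst ∨ v ∈ E.image Prod.snd :=
  mem_union

theorem indeg_eq_zero_iff : indeg E v = 0 ↔ v ∉ E.image Prod.snd := by
  simp only [indeg, card_eq_zero, filter_eq_empty_iff, mem_image, Prod.exists]
  aesop

theorem outdeg_eq_zero_iff : outdeg E v = 0 ↔ v ∉ E.image Prod.fst := by
  simp only [outdeg, card_eq_zero, filter_eq_empty_iff, mem_image, Prod.exists]
  aesop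

theorem indeg_mono (h : S ⊆ E) (v : V) : indeg S v ≤ indeg E v :=
  card_le_card (filter_subset_filter _ h)

theorem outdeg_mono (h : S ⊆ E) (v : V) : outdeg S v ≤ outdeg E v :=
  card_le_card (filter_subset_filter _ h)

end Degrees

namespace IsPhyloNet

variable {E : Finset (V × V)} {p : ℕ} {X : Finset V} {v : V}

theorem degrees_of_mem_leaves (hN : IsPhyloNet E p X) (hv : v ∈ X) :
    indeg E v = 1 ∧ outdeg E v = 0 := by
  rw [← hN.leaves_eq] at hv
  exact (mem_filter.mp hv).2

theorem indeg_le_two (hN : IsPhyloNet E p X) (v : V) : indeg E v ≤ 2 := by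
  by_cases h0 : indeg E v = 0
  · omega
  have hv : v ∈ verts E := mem_verts.mpr (Or.inr (by_contra fun h => h0 (indeg_eq_zero_iff.mpr h)))
  by_cases hX : v ∈ X
  · simp [hN.degrees_of_mem_leaves hX]
  · rcases (hN.internal_deg v hv h0 hX).1 with h | h <;> omega

theorem outdeg_ne_zero (hN : IsPhyloNet E p X) (hv : v ∈ verts E) (hX : v ∉ X) :
    outdeg E v ≠ 0 := by
  by_cases h0 : indeg E v = 0
  · rcases hN.root_outdeg v hv h0 with h | h <;> omega
  · rcases (hN.internal_deg v hv h0 hX).2 with h | h <;> omega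

theorem outdeg_le_two (hN : IsPhyloNet E p X) (v : V) : outdeg E v ≤ 2 := by
  by_cases h0 : outdeg E v = 0
  · omega
  have hv : v ∈ verts E := mem_verts.mpr (Or.inl (by_contra fun h => h0 (outdeg_eq_zero_iff.mpr h)))
  by_cases hX : v ∈ X
  · simp [hN.degrees_of_mem_leaves hX]
  by_cases hi : indeg E v = 0
  · rcases hN.root_outdeg v hv hi with h | h <;> omega
  · rcases (hN.internal_deg v hv hi hX).2 with h | h <;> omega

theorem indeg_eq_one_of_outdeg_eq_zero (hN : IsPhyloNet E p X) (hv : v ∈ verts E)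
    (h : outdeg E v = 0) : indeg E v = 1 := by
  by_cases hX : v ∈ X
  · exact (hN.degrees_of_mem_leaves hX).1
  · exact absurd h (hN.outdeg_ne_zero hv hX)

end IsPhyloNet

def SameTailsHeads (S E : Finset (V × V)) : Prop :=
  S.image Prod.fst = E.image Prod.fst ∧ S.image Prod.snd = E.image Prod.snd

section SupportNet

variable {E S : Finset (V × V)} {p : ℕ} {X : Finset V}

theorem SameTailsHeads.verts_eq (h : SameTailsHeads S E) : verts S = verts E := by
  rw [verts, verts, h.1, h.2]

theorem IsPhyloNet.of_subset (hN : IsPhyloNet E p X) (hS : S ⊆ E) (h : SameTailsHeads S E) :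
    IsPhyloNet S p X := by
  have hin (v : V) : indeg S v = 0 ↔ indeg E v = 0 := by
    rw [indeg_eq_zero_iff, indeg_eq_zero_iff, h.2]
  have hout (v : V) : outdeg S v = 0 ↔ outdeg E v = 0 := by
    rw [outdeg_eq_zero_iff, outdeg_eq_zero_iff, h.1]
  refine ⟨fun v hv => hN.acyclic v (Relation.TransGen.mono (fun _ _ hab => hS hab) _ _ hv),
    ?_, ?_, ?_, ?_⟩ <;> rw [h.verts_eq]
  · rw [← hN.roots_card]
    exact congrArg card (filter_congr fun v _ => hin v)
  · intro v hv h0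
    have := outdeg_mono hS v
    have := hout v
    rcases hN.root_outdeg v hv ((hin v).mp h0) with h | h <;> omega
  · rw [← hN.leaves_eq]
    refine filter_congr fun v hv => ?_
    have := hN.indeg_eq_one_of_outdeg_eq_zero hv
    have := indeg_mono hS v
    have := hin v
    have := hout v
    omega
  · intro v hv h0 hX
    have := indeg_mono hS v
    have := outdeg_mono hS v
    have := hout v
    have := hN.internal_deg v hv ((hin v).not.mp h0) hX
    omega

theorem IsSupportNet.sameTailsHeads (hN : IsPhyloNet E p X) (hsupp : IsSupportNet E S p X) :
    SameTailsHeads S E := by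
  obtain ⟨hS, hverts, hNS⟩ := hsupp
  refine ⟨(image_subset_image hS).antisymm fun v hv => ?_,
    (image_subset_image hS).antisymm fun v hv => ?_⟩
  · by_contra hvS
    have hvX : v ∉ X := fun hX => outdeg_eq_zero_iff.mp (hN.degrees_of_mem_leaves hX).2 hv
    exact hNS.outdeg_ne_zero (hverts ▸ mem_verts.mpr (Or.inl hv)) hvX (outdeg_eq_zero_iff.mpr hvS)
  · by_contra hvS
    have hroots : {u ∈ verts E | indeg E u = 0} ⊂ {u ∈ verts S | indeg S u = 0} := by
      have hsub : {u ∈ verts E | indeg E u = 0} ⊆ {u ∈ verts S | indeg S u = 0} := fun u hu => by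
        have := indeg_mono hS u
        rw [mem_filter] at hu ⊢
        exact ⟨hverts ▸ hu.1, by omega⟩
      refine (ssubset_iff_of_subset hsub).mpr ⟨v, ?_, fun hvE => ?_⟩
      · exact mem_filter.mpr ⟨hverts ▸ mem_verts.mpr (Or.inr hv), indeg_eq_zero_iff.mpr hvS⟩
      · exact indeg_eq_zero_iff.mp (mem_filter.mp hvE).2 hv
    have := card_lt_card hroots
    rw [hN.roots_card, hNS.roots_card] at this
    exact lt_irrefl p this

theorem isSupportNet_iff_sameTailsHeads (hN : IsPhyloNet E p X) (hS : S ⊆ E) :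
    IsSupportNet E S p X ↔ SameTailsHeads S E :=
  ⟨(·.sameTailsHeads hN), fun h => ⟨hS, h.verts_eq, hN.of_subset hS h⟩⟩

end SupportNet

theorem Finset.forall_exists_eq_iff_of_card_fiber_le_two {α β : Type*} [DecidableEq α]
    [DecidableEq β] {π : α → β} {E S : Finset α} (hS : S ⊆ E) (h2 : ∀ e ∈ E, #{f ∈ E | π f = π e} ≤ 2) :
    (∀ e ∈ E, ∃ f ∈ S, π f = π e) ↔
      (∀ e ∈ E, #{f ∈ E | π f = π e} = 1 → e ∈ S) ∧
        ∀ e₁ ∈ E, ∀ e₂ ∈ E, e₁ ≠ e₂ → π e₁ = π e₂ → e₁ ∈ S ∨ e₂ ∈ S := by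
  constructor
  · intro h
    refine ⟨fun e he h1 => ?_, fun e₁ he₁ e₂ he₂ hne hπ => ?_⟩
    · obtain ⟨f, hf, hfe⟩ := h e he
      rwa [card_le_one.mp h1.le f (mem_filter.mpr ⟨hS hf, hfe⟩) e (mem_filter.mpr ⟨he, rfl⟩)]
        at hf
    · obtain ⟨f, hf, hfe⟩ := h e₁ he₁
      have hpair : {e₁, e₂} ⊆ {f ∈ E | π f = π e₁} := by
        simp [insert_subset_iff, he₁, he₂, hπ]
      have hfiber := eq_of_subset_of_card_le hpair ((card_pair hne).symm ▸ h2 e₁ he₁)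
      have hf' : f ∈ ({e₁, e₂} : Finset α) := hfiber ▸ mem_filter.mpr ⟨hS hf, hfe⟩
      rcases mem_insert.mp hf' with rfl | hf₂
      · exact Or.inl hf
      · exact Or.inr (mem_singleton.mp hf₂ ▸ hf)
  · rintro ⟨h1, h2'⟩ e he
    obtain hc | hc : #{f ∈ E | π f = π e} = 1 ∨ 1 < #{f ∈ E | π f = π e} := by
      have : 0 < #{f ∈ E | π f = π e} := card_pos.mpr ⟨e, mem_filter.mpr ⟨he, rfl⟩⟩
      omega
    · exact ⟨e, h1 e he hc, rfl⟩
    · obtain ⟨f, hf, hfe⟩ := exists_mem_ne hc e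
      rw [mem_filter] at hf
      rcases h2' f hf.1 e he hfe hf.2 with h | h
      exacts [⟨f, h, hf.2⟩, ⟨e, h, rfl⟩]

theorem Finset.image_eq_image_iff_of_subset {α β : Type*} [DecidableEq β] {π : α → β}
    {E S : Finset α} (hS : S ⊆ E) : S.image π = E.image π ↔ ∀ e ∈ E, ∃ f ∈ S, π f = π e := by
  rw [Subset.antisymm_iff]
  simp [subset_iff, image_subset_image hS]

theorem aadmissible_self_iff_sameTailsHeads {E S : Finset (V × V)} {p : ℕ} {X : Finset V}
    (hN : IsPhyloNet E p X) (hS : S ⊆ E) : AAdmissible E E S ↔ SameTailsHeads S E := by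
  rw [SameTailsHeads, image_eq_image_iff_of_subset hS, image_eq_image_iff_of_subset hS,
    forall_exists_eq_iff_of_card_fiber_le_two hS fun e _ => hN.outdeg_le_two e.1,
    forall_exists_eq_iff_of_card_fiber_le_two hS fun e _ => hN.indeg_le_two e.2]
  simp only [AAdmissible, Shares, hS, true_and, or_imp, imp_and, forall_and]
  exact and_and_and_comm

theorem List.IsChain.extend_or_exists_two_neighbours {α : Type*} {R : α → α → Prop}
    (hR : ∀ x y, R x y → R y x) {l : List α} (hl : l.IsChain R) (hnd : l.Nodup) {a b : α}
    (ha : a ∈ l) (hab : R a b) :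
    ((b :: l).IsChain R ∨ (b :: l.reverse).IsChain R) ∨
      ∃ x ∈ l, ∃ y ∈ l, x ≠ y ∧ x ≠ a ∧ y ≠ a ∧ R a x ∧ R a y := by
  obtain ⟨s, t, rfl⟩ := append_of_mem ha
  rcases s.eq_nil_or_concat with rfl | ⟨s, x, rfl⟩
  · exact Or.inl (Or.inl (isChain_cons_cons.mpr ⟨hR _ _ hab, hl⟩))
  rcases t with _ | ⟨y, t⟩
  · have hrev : (s.concat x ++ [a]).reverse = a :: (s.concat x).reverse := by simp
    refine Or.inl (Or.inr ?_)
    rw [hrev, isChain_cons_cons, ← hrev, isChain_reverse]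
    exact ⟨hR _ _ hab, hl.imp fun _ _ h => hR _ _ h⟩
  · have hinfix : [x, a, y] <:+: s.concat x ++ a :: y :: t := ⟨s, t, by simp⟩
    have hchain := hl.infix hinfix
    have hnd' := hnd.sublist hinfix.sublist
    simp only [isChain_cons_cons, nodup_cons, mem_cons, not_or] at hchain hnd'
    refine Or.inr ⟨x, by simp, y, by simp, hnd'.1.2.1, hnd'.1.1, fun h => hnd'.2.1.1 h.symm,
      hR _ _ hchain.1, hchain.2.1⟩

theorem Shares.symm {e f : V × V} (h : Shares e f) : Shares f e :=
  h.imp Eq.symm Eq.symm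

theorem IsZigzagTrail.insert_or_exists_two_neighbours {E Z : Finset (V × V)}
    (hZ : IsZigzagTrail E Z) {e f : V × V} (he : e ∈ Z) (hf : f ∈ E) (hfZ : f ∉ Z)
    (hef : Shares e f) :
    IsZigzagTrail E (insert f Z) ∨
      ∃ g₁ ∈ Z, ∃ g₂ ∈ Z, g₁ ≠ g₂ ∧ g₁ ≠ e ∧ g₂ ≠ e ∧ Shares e g₁ ∧ Shares e g₂ := by
  obtain ⟨hZE, l, -, hnd, rfl, hl⟩ := hZ
  have hfl : f ∉ l := fun h => hfZ (List.mem_toFinset.mpr h)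
  rcases hl.extend_or_exists_two_neighbours (fun _ _ => Shares.symm) hnd
    (List.mem_toFinset.mp he) hef with hext | ⟨x, hx, y, hy, h⟩
  · refine Or.inl ⟨insert_subset hf hZE, ?_⟩
    rcases hext with hext | hext
    · exact ⟨f :: l, List.cons_ne_nil _ _, hnd.cons hfl, List.toFinset_cons, hext⟩
    · have hnd' : (f :: l.reverse).Nodup :=
        (List.nodup_reverse.mpr hnd).cons (mt List.mem_reverse.mp hfl)
      exact ⟨f :: l.reverse, List.cons_ne_nil _ _, hnd', by simp, hext⟩
  · exact Or.inr ⟨x, List.mem_toFinset.mpr hx, y, List.mem_toFinset.mpr hy, h⟩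

theorem IsPhyloNet.card_filter_shares_le_three {E : Finset (V × V)} {p : ℕ} {X : Finset V}
    (hN : IsPhyloNet E p X) {e : V × V} (he : e ∈ E) : #{f ∈ E | f.1 = e.1 ∨ f.2 = e.2} ≤ 3 := by
  have hunion : {f ∈ E | f.1 = e.1 ∨ f.2 = e.2} = {f ∈ E | f.1 = e.1} ∪ {f ∈ E | f.2 = e.2} :=
    filter_or _ _ _
  have hinter : 0 < #({f ∈ E | f.1 = e.1} ∩ {f ∈ E | f.2 = e.2}) :=
    card_pos.mpr ⟨e, by simp [he]⟩
  have hout : #{f ∈ E | f.1 = e.1} ≤ 2 := hN.outdeg_le_two e.1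
  have hin : #{f ∈ E | f.2 = e.2} ≤ 2 := hN.indeg_le_two e.2
  have := card_union_add_card_inter {f ∈ E | f.1 = e.1} {f ∈ E | f.2 = e.2}
  rw [hunion]
  omega

-- If `f` cannot be appended to the trail, `e` has two trail neighbours; with `e` and `f` these
-- are four edges at the endpoints of `e`, one more than the degree bound allows.
theorem IsMaximalZigzagTrail.mem_of_shares {E Z : Finset (V × V)} {p : ℕ} {X : Finset V}
    (hN : IsPhyloNet E p X) (hZ : IsMaximalZigzagTrail E Z) {e f : V × V} (he : e ∈ Z)
    (hf : f ∈ E) (hef : Shares e f) : f ∈ Z := by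
  by_contra hfZ
  rcases hZ.1.insert_or_exists_two_neighbours he hf hfZ hef with
    hins | ⟨g₁, hg₁, g₂, hg₂, h₁₂, h₁, h₂, hs₁, hs₂⟩
  · exact hZ.2 _ hins (ssubset_insert hfZ)
  have hZE := hZ.1.1
  have hsub : {e, f, g₁, g₂} ⊆ {x ∈ E | x.1 = e.1 ∨ x.2 = e.2} := by
    simp only [insert_subset_iff, singleton_subset_iff, mem_filter]
    exact ⟨⟨hZE he, by simp⟩, ⟨hf, hef.symm⟩, ⟨hZE hg₁, hs₁.symm⟩, ⟨hZE hg₂, hs₂.symm⟩⟩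
  have hcard : #{e, f, g₁, g₂} = 4 := by
    have hfe : f ≠ e := fun h => hfZ (h ▸ he)
    have hf₁ : f ≠ g₁ := fun h => hfZ (h ▸ hg₁)
    have hf₂ : f ≠ g₂ := fun h => hfZ (h ▸ hg₂)
    rw [card_insert_of_notMem (by simp [hfe.symm, h₁.symm, h₂.symm]),
      card_insert_of_notMem (by simp [hf₁, hf₂]), card_pair h₁₂]
  have := card_le_card hsub
  have := hN.card_filter_shares_le_three (hZE he)
  omega

theorem forall_aadmissible_inter_iff {E S : Finset (V × V)} {p : ℕ} {X : Finset V}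
    (hN : IsPhyloNet E p X) {d : ℕ} {Z : Fin d → Finset (V × V)}
    (hmax : ∀ i, IsMaximalZigzagTrail E (Z i)) (hcover : univ.biUnion Z = E) (hS : S ⊆ E) :
    (∀ i, AAdmissible E (Z i) (S ∩ Z i)) ↔ AAdmissible E E S := by
  have hZE (i : Fin d) : Z i ⊆ E := (hmax i).1.1
  constructor
  · intro hA
    refine ⟨hS, fun e he hdeg => ?_, fun e₁ he₁ e₂ he₂ hne hs => ?_⟩
    · obtain ⟨i, -, hi⟩ := mem_biUnion.mp (hcover ▸ he)
      exact (mem_inter.mp ((hA i).2.1 e hi hdeg)).1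
    · obtain ⟨i, -, hi⟩ := mem_biUnion.mp (hcover ▸ he₁)
      have hi₂ := (hmax i).mem_of_shares hN hi he₂ hs
      exact ((hA i).2.2 e₁ hi e₂ hi₂ hne hs).imp (mem_inter.mp · |>.1) (mem_inter.mp · |>.1)
  · intro hA i
    refine ⟨inter_subset_right, fun e he hdeg => mem_inter.mpr ⟨hA.2.1 e (hZE i he) hdeg, he⟩,
      fun e₁ he₁ e₂ he₂ hne hs => ?_⟩
    exact (hA.2.2 e₁ (hZE i he₁) e₂ (hZE i he₂) hne hs).imp
      (mem_inter.mpr ⟨·, he₁⟩) (mem_inter.mpr ⟨·, he₂⟩)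

theorem isSupportNet_iff_forall_aadmissible {E : Finset (V × V)} {p : ℕ} {X : Finset V}
    (hN : IsPhyloNet E p X) {d : ℕ} {Z : Fin d → Finset (V × V)}
    (hmax : ∀ i, IsMaximalZigzagTrail E (Z i)) (hcover : univ.biUnion Z = E)
    (S : Finset (V × V)) :
    IsSupportNet E S p X ↔ S ⊆ E ∧ ∀ i, AAdmissible E (Z i) (S ∩ Z i) := by
  have key (hS : S ⊆ E) : IsSupportNet E S p X ↔ ∀ i, AAdmissible E (Z i) (S ∩ Z i) := by
    rw [forall_aadmissible_inter_iff hN hmax hcover hS, aadmissible_self_iff_sameTailsHeads hN hS,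
      isSupportNet_iff_sameTailsHeads hN hS]
  exact ⟨fun h => ⟨h.1, (key h.1).mp h⟩, fun ⟨hS, h⟩ => (key hS).mpr h⟩

section Partition

open Function

variable {α ι : Type*} [DecidableEq α] [Fintype ι] {Z : ι → Finset α}

theorem card_eq_sum_card_inter (hdisj : Pairwise (Disjoint on Z)) {S : Finset α}
    (hS : S ⊆ univ.biUnion Z) : #S = ∑ i, #(S ∩ Z i) := by
  conv_lhs => rw [← inter_eq_left.mpr hS, inter_biUnion]
  exact card_biUnion fun i _ j _ hij =>
    (hdisj hij).mono inter_subset_right inter_subset_right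

theorem biUnion_inter_of_subset (hdisj : Pairwise (Disjoint on Z)) {T : ι → Finset α}
    (hT : ∀ i, T i ⊆ Z i) (i : ι) : univ.biUnion T ∩ Z i = T i := by
  ext x
  simp only [mem_inter, mem_biUnion, mem_univ, true_and]
  refine ⟨fun ⟨⟨j, hj⟩, hi⟩ => ?_, fun hx => ⟨⟨i, hx⟩, hT i hx⟩⟩
  obtain rfl | hji := eq_or_ne j i
  · exact hj
  · exact absurd hi (disjoint_left.mp (hdisj hji) (hT j hj))

theorem minimum_iff_forall_minimum_inter [DecidableEq ι] (hdisj : Pairwise (Disjoint on Z))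
    {Q : Finset α → Prop} {P : ι → Finset α → Prop} (hP : ∀ i T, P i T → T ⊆ Z i)
    (hQ : ∀ S, Q S ↔ S ⊆ univ.biUnion Z ∧ ∀ i, P i (S ∩ Z i))
    {S : Finset α} (hS : S ⊆ univ.biUnion Z) :
    (Q S ∧ ∀ S', Q S' → #S ≤ #S') ↔ ∀ i, P i (S ∩ Z i) ∧ ∀ T, P i T → #(S ∩ Z i) ≤ #T := by
  constructor
  · rintro ⟨hQS, hmin⟩ i
    have hPS := ((hQ S).mp hQS).2
    refine ⟨hPS i, fun T hT => ?_⟩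
    -- exchange the `i`-th block of `S` for `T`
    set T' := update (fun j => S ∩ Z j) i T with hT'
    have hT'Z (j : ι) : T' j ⊆ Z j := by
      obtain rfl | hji := eq_or_ne j i
      · simpa [T'] using hP j T hT
      · simp [T', hji]
    have hT'P (j : ι) : P j (T' j) := by
      obtain rfl | hji := eq_or_ne j i
      · simpa [T'] using hT
      · simpa [T', hji] using hPS j
    have hsub : univ.biUnion T' ⊆ univ.biUnion Z := biUnion_mono fun j _ => hT'Z j
    have hle := hmin _ ((hQ _).mpr
      ⟨hsub, fun j => (biUnion_inter_of_subset hdisj hT'Z j).symm ▸ hT'P j⟩)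
    rw [card_eq_sum_card_inter hdisj hS, card_eq_sum_card_inter hdisj hsub] at hle
    simp only [biUnion_inter_of_subset hdisj hT'Z] at hle
    have hrest : ∑ j ∈ univ.erase i, #(T' j) = ∑ j ∈ univ.erase i, #(S ∩ Z j) :=
      sum_congr rfl fun j hj => by rw [hT', update_of_ne (ne_of_mem_erase hj)]
    rw [← add_sum_erase _ _ (mem_univ i), ← add_sum_erase _ _ (mem_univ i), hrest] at hle
    simpa [T'] using hle
  · intro h
    refine ⟨(hQ S).mpr ⟨hS, fun i => (h i).1⟩, fun S' hS' => ?_⟩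
    obtain ⟨hS'Z, hPS'⟩ := (hQ S').mp hS'
    rw [card_eq_sum_card_inter hdisj hS, card_eq_sum_card_inter hdisj hS'Z]
    exact sum_le_sum fun i _ => (h i).2 _ (hPS' i)

end Partition

theorem stmt8_general (p : ℕ) (X : Finset V)
    (E : Finset (V × V)) (hN : IsPhyloNet E p X)
    (d : ℕ) (Z : Fin d → Finset (V × V))
    (hmax : ∀ i, IsMaximalZigzagTrail E (Z i))
    (hdisj : ∀ i j, i ≠ j → Disjoint (Z i) (Z j))
    (hcover : Finset.univ.biUnion Z = E)
    (S : Finset (V × V)) (hS : S ⊆ E) :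
    IsMinimumSupportNet E S p X ↔ ∀ i, CAdmissible E (Z i) (S ∩ Z i) := by
  have hsupp := isSupportNet_iff_forall_aadmissible hN hmax hcover
  subst hcover
  exact minimum_iff_forall_minimum_inter hdisj (fun _ _ hT => hT.1) hsupp hS

/-- `N[S]` is a minimum support network of `N` iff `S ∩ E(Zᵢ)` is C-admissible in `E(Zᵢ)`
for every maximal zig-zag trail `Zᵢ` of the decomposition of `N`. -/
theorem stmt8 (p : ℕ) (hp : 1 ≤ p) (X : Finset V) (hX : X.Nonempty)
    (E : Finset (V × V)) (hN : IsPhyloNet E p X)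
    (d : ℕ) (Z : Fin d → Finset (V × V))
    (hmax : ∀ i, IsMaximalZigzagTrail E (Z i))
    (hdisj : ∀ i j, i ≠ j → Disjoint (Z i) (Z j))
    (hcover : Finset.univ.biUnion Z = E)
    (S : Finset (V × V)) (hS : S ⊆ E) :
    IsMinimumSupportNet E S p X ↔ ∀ i, CAdmissible E (Z i) (S ∩ Z i) :=
  stmt8_general p X E hN d Z hmax hdisj hcover S hS
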